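/- arXiv:2304.00373 — 4 statements merged into one kernel-verified Lean document; each statement's English description precedes it below -/
import Mathlib

section
/- If an n-agent network is k-redundant, then for any subsets S, L of {1,…,n} with |S| = n−k and |L| ≥ n−k, argmin_x Σ_{i∈S} ‖A_i x − b_i‖² = argmin_x Σ_{i∈L} ‖A_i x − b_i‖². -/
open Matrix Finset

/-- The set of least squares solutions over the subset `S` of agents:
minimizers of `x ↦ ∑ i ∈ S, ‖A_i x − b_i‖²`. -/
def lsSet {n d : ℕ} {r : Fin n → ℕ} (A : ∀ i, Matrix (Fin (r i)) (Fin d) ℝ)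
    (b : ∀ i, Fin (r i) → ℝ) (S : Finset (Fin n)) : Set (Fin d → ℝ) :=
  {x | ∀ y : Fin d → ℝ,
      ∑ i ∈ S, ∑ j, ((A i *ᵥ x - b i) j) ^ 2 ≤ ∑ i ∈ S, ∑ j, ((A i *ᵥ y - b i) j) ^ 2}

/-- An `n`-agent network with data `(A_i, b_i)` is `k`-redundant if for any two subsets
`S₁, S₂` of agents with `|S₁| = |S₂| = n − k`, the least squares solution sets over
`S₁` and `S₂` coincide. -/
def kRedundant {n d : ℕ} {r : Fin n → ℕ} (A : ∀ i, Matrix (Fin (r i)) (Fin d) ℝ)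
    (b : ∀ i, Fin (r i) → ℝ) (k : ℕ) : Prop :=
  ∀ S₁ S₂ : Finset (Fin n), S₁.card = n - k → S₂.card = n - k →
    lsSet A b S₁ = lsSet A b S₂

/-!
Write `F_T = ∑_{i ∈ T} f_i` for the least squares objective of a set `T` of agents. Every `F_T`
has a minimizer: orthogonally project the stacked `b` onto the range of the stacked matrix.
Summing the objectives `F_{L \ {i}}` over `i ∈ L` counts every `f_j` exactly `|L| - 1` times, so
`∑_{i ∈ L} F_{L \ {i}} = (|L| - 1) • F_L`. Functions sharing a nonempty set `M` of minimizers
have `M` as the set of minimizers of their sum, so by induction on `|L|`, starting from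
`|L| = n - k`, every `F_L` has the minimizers of `F_S`.
-/

theorem Finset.sum_sum_erase {ι β : Type*} [DecidableEq ι] [AddCommMonoid β] [IsRightCancelAdd β]
    (s : Finset ι) (f : ι → β) : ∑ i ∈ s, ∑ j ∈ s.erase i, f j = (#s - 1) • ∑ j ∈ s, f j := by
  obtain rfl | hs := s.eq_empty_or_nonempty
  · simp
  obtain ⟨m, hm⟩ := Nat.exists_eq_add_one_of_ne_zero hs.card_pos.ne'
  apply add_right_cancel (b := ∑ j ∈ s, f j)
  rw [← sum_add_distrib, sum_congr rfl fun i hi => sum_erase_add s f hi, sum_const, hm,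
    Nat.add_sub_cancel, succ_nsmul]

def argminSet {X β : Type*} [LE β] (f : X → β) : Set X :=
  {x | ∀ y, f x ≤ f y}

section Argmin

variable {ι X β : Type*} [AddCommMonoid β]

theorem argminSet_sum_of_forall_eq [PartialOrder β] [IsOrderedCancelAddMonoid β]
    {s : Finset ι} (hs : s.Nonempty) {f : ι → X → β} {M : Set X} (hM : M.Nonempty)
    (h : ∀ i ∈ s, argminSet (f i) = M) : argminSet (∑ i ∈ s, f i) = M := by
  obtain ⟨x₀, hx₀⟩ := hM
  have hmin : ∀ i ∈ s, ∀ {x}, x ∈ M → ∀ y, f i x ≤ f i y := fun i hi x hx => by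
    rwa [← h i hi] at hx
  ext x
  simp only [argminSet, Finset.sum_apply, Set.mem_ofPred_eq]
  constructor
  · intro hx
    have hle : ∀ i ∈ s, f i x₀ ≤ f i x := fun i hi => hmin i hi hx₀ x
    have heq : ∀ i ∈ s, f i x₀ = f i x :=
      (sum_eq_sum_iff_of_le hle).1 (le_antisymm (sum_le_sum hle) (hx x₀))
    obtain ⟨i, hi⟩ := hs
    rw [← h i hi]
    intro y
    rw [← heq i hi]
    exact hmin i hi hx₀ y
  · intro hx y
    exact sum_le_sum fun i hi => hmin i hi hx y

theorem argminSet_nsmul [LinearOrder β] [IsOrderedCancelAddMonoid β] {m : ℕ} (hm : m ≠ 0)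
    (f : X → β) : argminSet (m • f) = argminSet f := by
  ext x
  simp only [argminSet, Pi.smul_apply, Set.mem_ofPred_eq, nsmul_le_nsmul_iff_right hm]

theorem argminSet_sum_eq_of_le_card [DecidableEq ι] [LinearOrder β] [IsOrderedCancelAddMonoid β]
    (f : ι → X → β) {p : ℕ} (hp : p ≠ 0) {M : Set X} (hM : M.Nonempty)
    (h : ∀ T : Finset ι, #T = p → argminSet (∑ i ∈ T, f i) = M) {L : Finset ι} (hL : p ≤ #L) :
    argminSet (∑ i ∈ L, f i) = M := by
  suffices ∀ m, p ≤ m → ∀ L : Finset ι, #L = m → argminSet (∑ i ∈ L, f i) = M from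
    this _ hL L rfl
  intro m hm
  induction m, hm using Nat.le_induction with
  | base => exact h
  | succ m hpm ih =>
    intro L hcard
    have herase : ∀ i ∈ L, argminSet (∑ j ∈ L.erase i, f j) = M := fun i hi =>
      ih _ (by rw [card_erase_of_mem hi, hcard]; rfl)
    calc argminSet (∑ i ∈ L, f i) = argminSet (m • ∑ i ∈ L, f i) :=
          (argminSet_nsmul (by omega) _).symm
      _ = argminSet (∑ i ∈ L, ∑ j ∈ L.erase i, f j) := by
          rw [sum_sum_erase, hcard, Nat.add_sub_cancel]
      _ = M := argminSet_sum_of_forall_eq (card_pos.1 (by omega)) hM herase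

end Argmin

section LeastSquares

variable {ι n : Type*} [Fintype n]

theorem exists_forall_norm_sub_le {𝕜 E F : Type*} [RCLike 𝕜] [AddCommGroup E] [Module 𝕜 E]
    [FiniteDimensional 𝕜 E] [NormedAddCommGroup F] [InnerProductSpace 𝕜 F] (T : E →ₗ[𝕜] F)
    (v : F) : ∃ x, ∀ y, ‖T x - v‖ ≤ ‖T y - v‖ := by
  obtain ⟨_, ⟨x, rfl⟩, hx⟩ := (LinearMap.range T).exists_norm_eq_iInf_of_complete_subspace
    (Submodule.complete_of_finiteDimensional _) v
  refine ⟨x, fun y => ?_⟩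
  rw [norm_sub_rev, hx, norm_sub_rev]
  exact ciInf_le ⟨0, Set.forall_mem_range.2 fun _ => norm_nonneg _⟩
    (⟨T y, LinearMap.mem_range_self T y⟩ : LinearMap.range T)

theorem exists_forall_sum_norm_sub_sq_le {𝕜 E : Type*} {F : ι → Type*} [Fintype ι] [RCLike 𝕜]
    [AddCommGroup E] [Module 𝕜 E] [FiniteDimensional 𝕜 E] [∀ i, NormedAddCommGroup (F i)]
    [∀ i, InnerProductSpace 𝕜 (F i)] (T : ∀ i, E →ₗ[𝕜] F i) (v : ∀ i, F i) :
    ∃ x, ∀ y, ∑ i, ‖T i x - v i‖ ^ 2 ≤ ∑ i, ‖T i y - v i‖ ^ 2 := by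
  let stack : E →ₗ[𝕜] PiLp 2 F :=
    (WithLp.linearEquiv 2 𝕜 (∀ i, F i)).symm.toLinearMap ∘ₗ LinearMap.pi T
  have hstack : ∀ z, ‖stack z - WithLp.toLp 2 v‖ ^ 2 = ∑ i, ‖T i z - v i‖ ^ 2 := fun z =>
    PiLp.norm_sq_eq_of_L2 F _
  obtain ⟨x, hx⟩ := exists_forall_norm_sub_le stack (WithLp.toLp 2 v)
  refine ⟨x, fun y => ?_⟩
  rw [← hstack, ← hstack]
  exact pow_le_pow_left₀ (norm_nonneg _) (hx y) 2

def sqResidual {m : Type*} [Fintype m] (A : Matrix m n ℝ) (b : m → ℝ) (x : n → ℝ) : ℝ :=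
  ∑ j, ((A *ᵥ x - b) j) ^ 2

theorem sqResidual_eq_norm_sq {m : Type*} [Fintype m] (A : Matrix m n ℝ) (b : m → ℝ) (x : n → ℝ) :
    sqResidual A b x = ‖WithLp.toLp 2 (A *ᵥ x - b)‖ ^ 2 := by
  rw [EuclideanSpace.real_norm_sq_eq]
  rfl

theorem argminSet_sum_sqResidual_nonempty {m : ι → Type*} [∀ i, Fintype (m i)]
    (A : ∀ i, Matrix (m i) n ℝ) (b : ∀ i, m i → ℝ) (s : Finset ι) :
    (argminSet (∑ i ∈ s, sqResidual (A i) (b i))).Nonempty := by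
  obtain ⟨x, hx⟩ := exists_forall_sum_norm_sub_sq_le (ι := s)
    (fun i => (WithLp.linearEquiv 2 ℝ (m i → ℝ)).symm.toLinearMap ∘ₗ (A i).mulVecLin)
    (fun i => WithLp.toLp 2 (b i))
  refine ⟨x, fun y => ?_⟩
  rw [Finset.sum_apply, Finset.sum_apply, ← sum_coe_sort s, ← sum_coe_sort s]
  simp only [sqResidual_eq_norm_sq]
  exact hx y

end LeastSquares

theorem lsSet_eq_argminSet {n d : ℕ} {r : Fin n → ℕ} (A : ∀ i, Matrix (Fin (r i)) (Fin d) ℝ)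
    (b : ∀ i, Fin (r i) → ℝ) (S : Finset (Fin n)) :
    lsSet A b S = argminSet (∑ i ∈ S, sqResidual (A i) (b i)) := by
  ext x
  simp only [lsSet, argminSet, sqResidual, Finset.sum_apply]

/-- If an `n`-agent network is `k`-redundant, then for any subsets
`S, L` with `|S| = n − k` and `|L| ≥ n − k`, the least squares solution sets over
`S` and `L` coincide. -/
theorem lsSet_eq_of_card_ge {n d : ℕ} {r : Fin n → ℕ}
    (A : ∀ i, Matrix (Fin (r i)) (Fin d) ℝ) (b : ∀ i, Fin (r i) → ℝ)
    (k : ℕ) (hk : k ≤ n - 1) (hred : kRedundant A b k)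
    (S L : Finset (Fin n)) (hS : S.card = n - k) (hL : n - k ≤ L.card) :
    lsSet A b S = lsSet A b L := by
  obtain rfl | hn := eq_or_ne n 0
  · rw [Subsingleton.elim S L]
  simp only [lsSet_eq_argminSet]
  refine (argminSet_sum_eq_of_le_card _ (by omega) (argminSet_sum_sqResidual_nonempty A b S)
    (fun T hT => ?_) hL).symm
  simpa only [lsSet_eq_argminSet] using hred T S hT hS
end

section
/- If an n-agent network is k-redundant with k ≥ 1, then the global least squares solution set X* = {x : A'A x = A'b} equals the intersection over i of the individual solution sets {x : A_i' A_i x = A_i' b_i}. -/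
open Matrix Finset

lemma sum_mulVec' {ι : Type*} (s : Finset ι) {d : ℕ}
    (M : ι → Matrix (Fin d) (Fin d) ℝ) (x : Fin d → ℝ) :
    (∑ i ∈ s, M i) *ᵥ x = ∑ i ∈ s, (M i) *ᵥ x := by
  ext j
  simp [Matrix.mulVec, dotProduct, Finset.sum_apply, Matrix.sum_apply, Finset.sum_mul]
  rw [Finset.sum_comm]

lemma sum_dotProduct' {ι : Type*} (s : Finset ι) {d : ℕ}
    (v : ι → (Fin d → ℝ)) (z : Fin d → ℝ) :
    (∑ i ∈ s, v i) ⬝ᵥ z = ∑ i ∈ s, (v i ⬝ᵥ z) := by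
  simp only [dotProduct, Finset.sum_apply, Finset.sum_mul]
  rw [Finset.sum_comm]

lemma single_expand {ρ d : ℕ} (B : Matrix (Fin ρ) (Fin d) ℝ) (c : Fin ρ → ℝ)
    (x z : Fin d → ℝ) (t : ℝ) :
    ∑ j, ((B *ᵥ (x + t • z) - c) j) ^ 2
      = ∑ j, ((B *ᵥ x - c) j) ^ 2
        + 2 * t * (((Bᵀ * B) *ᵥ x - Bᵀ *ᵥ c) ⬝ᵥ z)
        + t ^ 2 * ((B *ᵥ z) ⬝ᵥ (B *ᵥ z)) := by
  have h1 : B *ᵥ (x + t • z) - c = (B *ᵥ x - c) + t • (B *ᵥ z) := by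
    rw [Matrix.mulVec_add, Matrix.mulVec_smul]; abel
  have h2 : ((Bᵀ * B) *ᵥ x - Bᵀ *ᵥ c) ⬝ᵥ z = (B *ᵥ x - c) ⬝ᵥ (B *ᵥ z) := by
    rw [← Matrix.mulVec_mulVec, ← Matrix.mulVec_sub, Matrix.mulVec_transpose,
      Matrix.dotProduct_mulVec]
  rw [h1, h2]
  simp only [dotProduct, Pi.add_apply, Pi.smul_apply, smul_eq_mul,
    Finset.mul_sum, Finset.sum_mul]
  rw [← Finset.sum_add_distrib, ← Finset.sum_add_distrib]
  exact Finset.sum_congr rfl fun j _ => by ring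

lemma sum_expand {n d : ℕ} {r : Fin n → ℕ} (A : ∀ i, Matrix (Fin (r i)) (Fin d) ℝ)
    (b : ∀ i, Fin (r i) → ℝ) (S : Finset (Fin n)) (x z : Fin d → ℝ) (t : ℝ) :
    ∑ i ∈ S, ∑ j, ((A i *ᵥ (x + t • z) - b i) j) ^ 2
      = ∑ i ∈ S, ∑ j, ((A i *ᵥ x - b i) j) ^ 2
        + 2 * t * (((∑ i ∈ S, (A i)ᵀ * A i) *ᵥ x - ∑ i ∈ S, (A i)ᵀ *ᵥ b i) ⬝ᵥ z)
        + t ^ 2 * ∑ i ∈ S, ((A i *ᵥ z) ⬝ᵥ (A i *ᵥ z)) := by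
  have key : ∀ i ∈ S, ∑ j, ((A i *ᵥ (x + t • z) - b i) j) ^ 2
      = ∑ j, ((A i *ᵥ x - b i) j) ^ 2
        + 2 * t * ((((A i)ᵀ * A i) *ᵥ x - (A i)ᵀ *ᵥ b i) ⬝ᵥ z)
        + t ^ 2 * ((A i *ᵥ z) ⬝ᵥ (A i *ᵥ z)) := fun i _ => single_expand _ _ _ _ _
  rw [Finset.sum_congr rfl key, Finset.sum_add_distrib, Finset.sum_add_distrib,
    ← Finset.mul_sum, ← Finset.mul_sum]
  congr 2
  rw [sum_mulVec', ← Finset.sum_sub_distrib, sum_dotProduct' S _ z]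

lemma mem_lsSet_iff {n d : ℕ} {r : Fin n → ℕ} (A : ∀ i, Matrix (Fin (r i)) (Fin d) ℝ)
    (b : ∀ i, Fin (r i) → ℝ) (S : Finset (Fin n)) (x : Fin d → ℝ) :
    x ∈ lsSet A b S ↔ (∑ i ∈ S, (A i)ᵀ * A i) *ᵥ x = ∑ i ∈ S, (A i)ᵀ *ᵥ b i := by
  constructor
  · intro h
    rw [← sub_eq_zero]
    by_contra hne
    set g := (∑ i ∈ S, (A i)ᵀ * A i) *ᵥ x - ∑ i ∈ S, (A i)ᵀ *ᵥ b i with hg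
    set G := g ⬝ᵥ g with hG
    have hGnn : 0 ≤ G := Finset.sum_nonneg fun j _ => mul_self_nonneg _
    have hGpos : 0 < G := lt_of_le_of_ne hGnn fun hc =>
      hne ((dotProduct_self_eq_zero).mp hc.symm)
    set Q := ∑ i ∈ S, ((A i *ᵥ g) ⬝ᵥ (A i *ᵥ g)) with hQ
    have hQnn : 0 ≤ Q := Finset.sum_nonneg fun i _ =>
      Finset.sum_nonneg fun j _ => mul_self_nonneg _
    have hden : (0:ℝ) < Q + 1 := by linarith
    set t : ℝ := -(G / (Q + 1)) with ht
    have h1 := h (x + t • g)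
    rw [sum_expand] at h1
    have h0 : 0 ≤ 2 * t * G + t ^ 2 * Q := by rw [hG, hg]; linarith [h1]
    have e : 2 * t * G + t ^ 2 * Q = (G ^ 2 * (Q - 2 * (Q + 1))) / (Q + 1) ^ 2 := by
      rw [ht]; field_simp; ring
    have hnum : G ^ 2 * (Q - 2 * (Q + 1)) < 0 := by nlinarith
    have : (G ^ 2 * (Q - 2 * (Q + 1))) / (Q + 1) ^ 2 < 0 :=
      div_neg_of_neg_of_pos hnum (by positivity)
    linarith [h0, e ▸ h0]
  · intro h y
    have h2 := sum_expand A b S x (y - x) 1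
    rw [show x + (1:ℝ) • (y - x) = y by rw [one_smul]; abel] at h2
    rw [h, sub_self, zero_dotProduct] at h2
    have hQnn : 0 ≤ ∑ i ∈ S, ((A i *ᵥ (y - x)) ⬝ᵥ (A i *ᵥ (y - x))) :=
      Finset.sum_nonneg fun i _ => Finset.sum_nonneg fun j _ => mul_self_nonneg _
    rw [h2]; nlinarith

lemma range_transpose_mul_self' {m : Type*} [Fintype m] {d : ℕ} (C : Matrix m (Fin d) ℝ) :
    LinearMap.range (Cᵀ * C).mulVecLin = LinearMap.range Cᵀ.mulVecLin := by
  apply Submodule.eq_of_le_of_finrank_le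
  · rintro x ⟨z, rfl⟩
    exact ⟨C *ᵥ z, by simp [Matrix.mulVecLin_apply, Matrix.mulVec_mulVec]⟩
  · have h1 := Matrix.rank_transpose_mul_self C
    have h2 := Matrix.rank_transpose C
    unfold Matrix.rank at h1 h2
    omega

lemma exists_normal_sol {n d : ℕ} {r : Fin n → ℕ} (A : ∀ i, Matrix (Fin (r i)) (Fin d) ℝ)
    (b : ∀ i, Fin (r i) → ℝ) (S : Finset (Fin n)) :
    ∃ x : Fin d → ℝ, (∑ i ∈ S, (A i)ᵀ * A i) *ᵥ x = ∑ i ∈ S, (A i)ᵀ *ᵥ b i := by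
  classical
  set C : Matrix (Σ i : {i // i ∈ S}, Fin (r i.1)) (Fin d) ℝ := fun p k => A p.1.1 p.2 k with hC
  set c : (Σ i : {i // i ∈ S}, Fin (r i.1)) → ℝ := fun p => b p.1.1 p.2 with hc
  have hM : Cᵀ * C = ∑ i ∈ S, (A i)ᵀ * A i := by
    ext a b'
    simp only [Matrix.mul_apply, Matrix.transpose_apply, Matrix.sum_apply]
    rw [← Finset.univ_sigma_univ, Finset.sum_sigma]
    rw [← Finset.sum_coe_sort S (fun i => ∑ j, A i j a * A i j b')]
  have hv : Cᵀ *ᵥ c = ∑ i ∈ S, (A i)ᵀ *ᵥ b i := by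
    ext a
    simp only [Matrix.mulVec, dotProduct, Matrix.transpose_apply, Finset.sum_apply]
    rw [← Finset.univ_sigma_univ, Finset.sum_sigma]
    rw [← Finset.sum_coe_sort S (fun i => ∑ j, A i j a * b i j)]
  have hmem : (∑ i ∈ S, (A i)ᵀ *ᵥ b i) ∈ LinearMap.range (Cᵀ * C).mulVecLin := by
    rw [range_transpose_mul_self']
    exact ⟨c, hv⟩
  obtain ⟨x, hx⟩ := hmem
  exact ⟨x, by rw [← hM]; exact hx⟩

lemma exists_common_sol {n d : ℕ} {r : Fin n → ℕ}
    (A : ∀ i, Matrix (Fin (r i)) (Fin d) ℝ) (b : ∀ i, Fin (r i) → ℝ)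
    (k : ℕ) (hk1 : 1 ≤ k) (hkn : k ≤ n - 1) (hred : kRedundant A b k) :
    ∃ y : Fin d → ℝ, ∀ i, ((A i)ᵀ * A i) *ᵥ y = (A i)ᵀ *ᵥ b i := by
  classical
  set m := n - k with hm
  have hn2 : 2 ≤ n := by omega
  have hm1 : 1 ≤ m := by omega
  have hmn : m ≤ n - 1 := by omega
  -- pick a subset of size m
  obtain ⟨S₀, -, hS₀⟩ := Finset.exists_subset_card_eq
    (show m ≤ (Finset.univ : Finset (Fin n)).card by simp; omega)
  obtain ⟨y, hy⟩ := exists_normal_sol A b S₀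
  set g : Fin n → (Fin d → ℝ) :=
    fun i => ((A i)ᵀ * A i) *ᵥ y - (A i)ᵀ *ᵥ b i with hgdef
  have hall : ∀ S : Finset (Fin n), S.card = m → ∑ i ∈ S, g i = 0 := by
    intro S hS
    have hy0 : y ∈ lsSet A b S₀ := (mem_lsSet_iff A b S₀ y).mpr hy
    have hyS : y ∈ lsSet A b S := by rw [← hred S₀ S hS₀ hS]; exact hy0
    have := (mem_lsSet_iff A b S y).mp hyS
    rw [hgdef, Finset.sum_sub_distrib, ← sum_mulVec', this, sub_self]
  have hpair : ∀ i j : Fin n, g i = g j := by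
    intro i j
    rcases eq_or_ne i j with rfl | hij
    · rfl
    -- pick T of size m-1 avoiding i and j
    have hcard : m - 1 ≤ ((Finset.univ.erase i).erase j).card := by
      rw [Finset.card_erase_of_mem (Finset.mem_erase.mpr ⟨hij.symm, Finset.mem_univ j⟩),
        Finset.card_erase_of_mem (Finset.mem_univ i), Finset.card_univ, Fintype.card_fin]
      omega
    obtain ⟨T, hTsub, hT⟩ := Finset.exists_subset_card_eq hcard
    have hiT : i ∉ T := fun h => (Finset.mem_erase.mp (Finset.mem_of_subset hTsub h)).2
      |> fun h2 => (Finset.mem_erase.mp h2).1 rfl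
    have hjT : j ∉ T := fun h => (Finset.mem_erase.mp (Finset.mem_of_subset hTsub h)).1 rfl
    have h1 : ∑ l ∈ insert i T, g l = 0 := hall _ (by rw [Finset.card_insert_of_notMem hiT, hT]; omega)
    have h2 : ∑ l ∈ insert j T, g l = 0 := hall _ (by rw [Finset.card_insert_of_notMem hjT, hT]; omega)
    rw [Finset.sum_insert hiT] at h1
    rw [Finset.sum_insert hjT] at h2
    have h3 : g i + ∑ l ∈ T, g l = g j + ∑ l ∈ T, g l := by rw [h1, h2]
    exact add_right_cancel h3
  refine ⟨y, fun i => ?_⟩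
  have hconst : ∑ l ∈ S₀, g l = (m : ℝ) • g i := by
    rw [Finset.sum_congr rfl fun l _ => hpair l i, Finset.sum_const, hS₀,
      Nat.cast_smul_eq_nsmul]
  have h0 : (m : ℝ) • g i = 0 := by rw [← hconst, hall S₀ hS₀]
  have hgz : g i = 0 := by
    rcases smul_eq_zero.mp h0 with h | h
    · exact absurd (Nat.cast_eq_zero.mp h) (by omega)
    · exact h
  rw [hgdef] at hgz
  exact sub_eq_zero.mp hgz

/-- If an `n`-agent network is `k`-redundant with `k ≥ 1`, then the
global least squares solution set `X* = {x : A'A x = A'b}` (with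
`A'A = ∑ i, A_iᵀ A_i` and `A'b = ∑ i, A_iᵀ b_i`) equals the intersection over all
agents `i` of the individual solution sets `{x : A_iᵀ A_i x = A_iᵀ b_i}`. -/
theorem global_ls_eq_inter_individual {n d : ℕ} {r : Fin n → ℕ}
    (A : ∀ i, Matrix (Fin (r i)) (Fin d) ℝ) (b : ∀ i, Fin (r i) → ℝ)
    (k : ℕ) (hk1 : 1 ≤ k) (hkn : k ≤ n - 1) (hred : kRedundant A b k) :
    {x : Fin d → ℝ | (∑ i, (A i)ᵀ * A i) *ᵥ x = ∑ i, (A i)ᵀ *ᵥ b i}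
      = ⋂ i : Fin n, {x : Fin d → ℝ | ((A i)ᵀ * A i) *ᵥ x = (A i)ᵀ *ᵥ b i} := by
  ext x
  simp only [Set.mem_setOf_eq, Set.mem_iInter]
  constructor
  · intro hx i
    obtain ⟨y, hy⟩ := exists_common_sol A b k hk1 hkn hred
    have hMy : (∑ i, (A i)ᵀ * A i) *ᵥ y = ∑ i, (A i)ᵀ *ᵥ b i := by
      rw [sum_mulVec']; exact Finset.sum_congr rfl fun i _ => hy i
    set z := x - y with hz
    have hdiff : (∑ i, (A i)ᵀ * A i) *ᵥ z = 0 := by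
      rw [hz, Matrix.mulVec_sub, hx, hMy, sub_self]
    have h0 : ∑ i, ((A i *ᵥ z) ⬝ᵥ (A i *ᵥ z)) = 0 := by
      have e : ∑ i, ((A i *ᵥ z) ⬝ᵥ (A i *ᵥ z)) = ((∑ i, (A i)ᵀ * A i) *ᵥ z) ⬝ᵥ z := by
        rw [sum_mulVec', sum_dotProduct' Finset.univ _ z]
        exact Finset.sum_congr rfl fun i _ => by
          rw [← Matrix.mulVec_mulVec, Matrix.mulVec_transpose, ← Matrix.dotProduct_mulVec]
      rw [e, hdiff, zero_dotProduct]
    have hz0 : A i *ᵥ z = 0 := by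
      have hterm := (Finset.sum_eq_zero_iff_of_nonneg
        (fun i _ => Finset.sum_nonneg fun j _ => mul_self_nonneg _)).mp h0 i (Finset.mem_univ i)
      exact dotProduct_self_eq_zero.mp hterm
    have hMz : ((A i)ᵀ * A i) *ᵥ z = 0 := by
      rw [← Matrix.mulVec_mulVec, hz0, Matrix.mulVec_zero]
    rw [hz, Matrix.mulVec_sub] at hMz
    rw [sub_eq_zero.mp hMz, hy i]
  · intro hx
    rw [sum_mulVec']
    exact Finset.sum_congr rfl fun i _ => hx i
end

section
/- Let G₁,…,G_k be a finite sequence of m-vertex directed graphs, each with self-loops at all vertices, and all sunk at a vertex v. If k ≤ m−1, then v has at least k+1 in-neighbors in the composition G_k ∘ G_{k−1} ∘ ⋯ ∘ G₁. If k ≥ m−1, then every vertex of the composition is an in-neighbor of v. -/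
/-- Composition of two directed graphs on the same vertex set: `(i,j)` is an edge of
`comp2 Gq Gp` iff there is `k` with `(i,k)` an edge of `Gp` and `(k,j)` an edge of `Gq`. -/
def comp2 {m : ℕ} (Gq Gp : Fin m → Fin m → Prop) : Fin m → Fin m → Prop :=
  fun i j => ∃ k, Gp i k ∧ Gq k j

/-- The composition `G_k ∘ G_{k−1} ∘ ⋯ ∘ G₁` of the first `k` graphs of the sequence
`G₁, G₂, …` (the composition of the empty sequence is the identity relation). -/
def compSeq {m : ℕ} (G : ℕ → Fin m → Fin m → Prop) : ℕ → Fin m → Fin m → Prop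
  | 0 => Eq
  | k + 1 => comp2 (G (k + 1)) (compSeq G k)

lemma compSeq_shift {m : ℕ} (G : ℕ → Fin m → Fin m → Prop) (k : ℕ) (u v : Fin m) :
    compSeq G (k + 1) u v ↔ ∃ w, G 1 u w ∧ compSeq (fun t => G (t + 1)) k w v := by
  induction k generalizing v with
  | zero => simp [compSeq, comp2]
  | succ k ih =>
    constructor
    · rintro ⟨w, hw, hwv⟩
      obtain ⟨x, hx, hxw⟩ := ih w |>.mp hw
      exact ⟨x, hx, w, hxw, hwv⟩
    · rintro ⟨x, hx, w, hxw, hwv⟩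
      exact ⟨w, (ih w).mpr ⟨x, hx, hxw⟩, hwv⟩

lemma crossing {α : Type*} {r : α → α → Prop} {S : Set α} {u v : α}
    (h : Relation.ReflTransGen r u v) (hu : u ∉ S) (hv : v ∈ S) :
    ∃ a b, r a b ∧ a ∉ S ∧ b ∈ S := by
  induction h using Relation.ReflTransGen.head_induction_on with
  | refl => exact absurd hv hu
  | head hab _ ih =>
    rename_i a b _
    by_cases hb : b ∈ S
    · exact ⟨a, b, hab, hu, hb⟩
    · exact ih hb

lemma compSeq_diag {m : ℕ} (G : ℕ → Fin m → Fin m → Prop) (k : ℕ) (v : Fin m)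
    (hself : ∀ t, 1 ≤ t → t ≤ k → G t v v) : compSeq G k v v := by
  induction k with
  | zero => rfl
  | succ k ih =>
    exact ⟨v, ih (fun t h1 h2 => hself t h1 (h2.trans (Nat.le_succ k))),
      hself (k + 1) (Nat.succ_le_succ (Nat.zero_le k)) le_rfl⟩

lemma key {m : ℕ} (k : ℕ) : ∀ (G : ℕ → Fin m → Fin m → Prop) (v : Fin m),
    (∀ t, 1 ≤ t → t ≤ k → ∀ i, G t i i) →
    (∀ t, 1 ≤ t → t ≤ k → ∀ u, Relation.ReflTransGen (G t) u v) →
    min (k + 1) m ≤ {u | compSeq G k u v}.ncard := by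
  induction k with
  | zero =>
    intro G v _ _
    have : {u | compSeq G 0 u v} = {v} := by
      ext u; simp [compSeq]
    rw [this, Set.ncard_singleton]
    have : 0 < m := v.pos
    omega
  | succ k ih =>
    intro G v hself hsunk
    set G' : ℕ → Fin m → Fin m → Prop := fun t => G (t + 1) with hG'
    have hself' : ∀ t, 1 ≤ t → t ≤ k → ∀ i, G' t i i := fun t h1 h2 i =>
      hself (t + 1) (by omega) (by omega) i
    have hsunk' : ∀ t, 1 ≤ t → t ≤ k → ∀ u, Relation.ReflTransGen (G' t) u v := fun t h1 h2 u =>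
      hsunk (t + 1) (by omega) (by omega) u
    have hIH := ih G' v hself' hsunk'
    set S' : Set (Fin m) := {u | compSeq G' k u v} with hS'
    set S : Set (Fin m) := {u | compSeq G (k + 1) u v} with hS
    have hmem : ∀ u, u ∈ S ↔ ∃ w, G 1 u w ∧ w ∈ S' := fun u => compSeq_shift G k u v
    have hsub : S' ⊆ S := fun u hu =>
      (hmem u).mpr ⟨u, hself 1 le_rfl (by omega) u, hu⟩
    by_cases hall : S' = Set.univ
    · have hSuniv : S = Set.univ :=
        Set.eq_univ_of_subset hsub (by rw [hall])
      rw [hSuniv]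
      have : (Set.univ : Set (Fin m)).ncard = m := by
        simp [Set.ncard_univ]
      omega
    · obtain ⟨u, hu⟩ : ∃ u, u ∉ S' := by
        by_contra h
        push_neg at h
        exact hall (Set.eq_univ_of_forall h)
      have hvS' : v ∈ S' :=
        compSeq_diag G' k v (fun t h1 h2 => hself' t h1 h2 v)
      obtain ⟨a, b, hab, haS', hbS'⟩ :=
        crossing (hsunk 1 le_rfl (by omega) u) hu hvS'
      have haS : a ∈ S := (hmem a).mpr ⟨b, hab, hbS'⟩
      have hins : insert a S' ⊆ S := Set.insert_subset haS hsub
      have h1 : (insert a S').ncard = S'.ncard + 1 :=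
        Set.ncard_insert_of_notMem haS' (Set.toFinite S')
      have h2 : (insert a S').ncard ≤ S.ncard :=
        Set.ncard_le_ncard hins (Set.toFinite S)
      have h3 : S'.ncard ≤ m := by
        have := Set.ncard_le_ncard (Set.subset_univ S') (Set.toFinite _)
        simpa [Set.ncard_univ] using this
      omega

/-- Let `G₁, …, G_k` be `m`-vertex directed graphs, each with
self-loops at all vertices and each sunk at `v` (every vertex has a directed path
to `v`). If `k ≤ m − 1` then `v` has at least `k + 1` in-neighbors in the
composition `G_k ∘ ⋯ ∘ G₁`; if `k ≥ m − 1` then every vertex is an in-neighbor of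
`v` in the composition. -/
theorem sunk_composition_in_neighbors {m : ℕ} (G : ℕ → Fin m → Fin m → Prop)
    (k : ℕ) (v : Fin m)
    (hself : ∀ t, 1 ≤ t → t ≤ k → ∀ i, G t i i)
    (hsunk : ∀ t, 1 ≤ t → t ≤ k → ∀ u, Relation.ReflTransGen (G t) u v) :
    (k ≤ m - 1 → k + 1 ≤ {u | compSeq G k u v}.ncard) ∧
      (m - 1 ≤ k → ∀ u, compSeq G k u v) := by
  have hm : 0 < m := v.pos
  have hkey := key k G v hself hsunk
  constructor
  · intro hk
    have : min (k + 1) m = k + 1 := by omega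
    omega
  · intro hk u
    have hcard : m ≤ {u | compSeq G k u v}.ncard := by
      have : min (k + 1) m = m := by omega
      omega
    have huniv : {u | compSeq G k u v} = Set.univ := by
      apply Set.eq_of_subset_of_ncard_le (Set.subset_univ _)
      simpa [Set.ncard_univ] using hcard
    exact Set.eq_univ_iff_forall.mp huniv u
end

section
/- With the notation of the quotient construction (P̄_i = Q P_i Q', Q' an orthonormal basis matrix of (⋂_{i∈H} 𝒫_i)^⊥): for any nonempty subset E ⊆ H, the intersection of the column spans of the P̄_i for i ∈ E is {0} if and only if ⋂_{i∈E} 𝒫_i = ⋂_{i∈H} 𝒫_i. -/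
/-!
Compressing by `Q'` identifies the fixed space of `P̄_i` with the preimage under `Q'` of `𝒫_i`:
for an orthogonal projection `P`, `⟨P z, z⟩ = ‖z‖²` forces `P z = z`. Hence `⋂_{i∈E} 𝒫̄_i = {0}`
says that `⋂_{i∈E} 𝒫_i` meets `range Q' = K^⊥` only in `0`. As `⋂_{i∈E} 𝒫_i ⊇ K`, the
orthogonal decomposition along `K` shows that this happens exactly when `⋂_{i∈E} 𝒫_i = K`.
-/

open Matrix

theorem Function.Injective.preimage_eq_zero_iff {α β : Type*} [Zero α] [Zero β] {f : α → β}
    (hf : Function.Injective f) (hf0 : f 0 = 0) {S : Set β} (hS : 0 ∈ S) :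
    f ⁻¹' S = {0} ↔ ∀ x ∈ S, x ∈ Set.range f → x = 0 := by
  refine ⟨?_, fun h => Set.eq_singleton_iff_unique_mem.mpr ⟨by simpa [hf0], fun a ha => ?_⟩⟩
  · rintro h _ hx ⟨a, rfl⟩
    rw [show a = 0 from h.subset hx, hf0]
  · exact hf ((h _ ha ⟨a, rfl⟩).trans hf0.symm)

namespace Matrix

variable {ι n m R : Type*} [Fintype n] [Fintype m] [CommRing R]

def commonFixedSubmodule (A : ι → Matrix n n R) (s : Set ι) : Submodule R (n → R) where
  carrier := ⋂ i ∈ s, {x | A i *ᵥ x = x}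
  add_mem' hx hy := by simp_all [mulVec_add]
  zero_mem' := by simp
  smul_mem' c x hx := by simp_all [mulVec_smul]

@[simp]
theorem mem_commonFixedSubmodule {A : ι → Matrix n n R} {s : Set ι} {x : n → R} :
    x ∈ commonFixedSubmodule A s ↔ ∀ i ∈ s, A i *ᵥ x = x := by
  simp [commonFixedSubmodule]

theorem commonFixedSubmodule_anti (A : ι → Matrix n n R) {s t : Set ι} (hst : s ⊆ t) :
    commonFixedSubmodule A t ≤ commonFixedSubmodule A s :=
  Set.biInter_subset_biInter_left hst

theorem mulVec_dotProduct (A : Matrix n m R) (x : m → R) (y : n → R) :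
    (A *ᵥ x) ⬝ᵥ y = x ⬝ᵥ (Aᵀ *ᵥ y) := by
  rw [dotProduct_comm, dotProduct_mulVec, ← mulVec_transpose, dotProduct_comm]

variable [LinearOrder R] [IsStrictOrderedRing R]

theorem mulVec_eq_self_of_mulVec_dotProduct_eq {P : Matrix n n R} (hPs : P.IsSymm)
    (hPi : IsIdempotentElem P) {z : n → R} (h : (P *ᵥ z) ⬝ᵥ z = z ⬝ᵥ z) : P *ᵥ z = z := by
  have hPP : (P *ᵥ z) ⬝ᵥ (P *ᵥ z) = (P *ᵥ z) ⬝ᵥ z := by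
    rw [mulVec_dotProduct, hPs.eq, mulVec_mulVec, hPi.eq, dotProduct_comm]
  have : (z - P *ᵥ z) ⬝ᵥ (z - P *ᵥ z) = 0 := by
    simp only [sub_dotProduct, dotProduct_sub, hPP, dotProduct_comm z (P *ᵥ z), h]
    ring
  exact (sub_eq_zero.mp (dotProduct_self_eq_zero.mp this)).symm

theorem transpose_mul_mul_mulVec_eq_self_iff [DecidableEq m] {Q : Matrix n m R}
    (hQ : Qᵀ * Q = 1) {P : Matrix n n R} (hPs : P.IsSymm) (hPi : IsIdempotentElem P)
    (y : m → R) : (Qᵀ * P * Q) *ᵥ y = y ↔ P *ᵥ (Q *ᵥ y) = Q *ᵥ y := by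
  have hQQ : Qᵀ *ᵥ (Q *ᵥ y) = y := by rw [mulVec_mulVec, hQ, one_mulVec]
  rw [← mulVec_mulVec, ← mulVec_mulVec]
  refine ⟨fun h => mulVec_eq_self_of_mulVec_dotProduct_eq hPs hPi ?_, fun h => by rw [h, hQQ]⟩
  calc (P *ᵥ (Q *ᵥ y)) ⬝ᵥ (Q *ᵥ y) = y ⬝ᵥ (Qᵀ *ᵥ (P *ᵥ (Q *ᵥ y))) := by
        rw [dotProduct_comm, mulVec_dotProduct]
    _ = y ⬝ᵥ (Qᵀ *ᵥ (Q *ᵥ y)) := by rw [h, hQQ]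
    _ = (Q *ᵥ y) ⬝ᵥ (Q *ᵥ y) := (mulVec_dotProduct Q y _).symm

end Matrix

namespace Submodule

variable {n : Type*} [Fintype n]

theorem exists_mem_forall_dotProduct_sub_eq_zero (K : Submodule ℝ (n → ℝ)) (x : n → ℝ) :
    ∃ k ∈ K, ∀ k' ∈ K, k' ⬝ᵥ (x - k) = 0 := by
  let K₂ := K.comap (WithLp.linearEquiv 2 ℝ (n → ℝ)).toLinearMap
  refine ⟨(K₂.starProjection (WithLp.toLp 2 x)).ofLp, K₂.starProjection_apply_mem _,
    fun k' hk' => ?_⟩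
  have := K₂.sub_starProjection_mem_orthogonal (WithLp.toLp 2 x) (WithLp.toLp 2 k') hk'
  simpa [EuclideanSpace.inner_eq_star_dotProduct, dotProduct_comm] using this

theorem forall_orthogonal_eq_zero_iff_eq {K F : Submodule ℝ (n → ℝ)} (hKF : K ≤ F) :
    (∀ x ∈ F, (∀ k ∈ K, k ⬝ᵥ x = 0) → x = 0) ↔ F = K := by
  refine ⟨fun h => le_antisymm (fun x hx => ?_) hKF, ?_⟩
  · obtain ⟨k, hk, hperp⟩ := K.exists_mem_forall_dotProduct_sub_eq_zero x
    have : x - k = 0 := h _ (F.sub_mem hx (hKF hk)) hperp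
    rwa [sub_eq_zero.mp this]
  · rintro rfl x hx hperp
    exact dotProduct_self_eq_zero.mp (hperp x hx)

end Submodule

theorem quotient_projection_intersection_general {N d m : ℕ} (H E : Finset (Fin N))
    (hE : E ⊆ H)
    (P : Fin N → Matrix (Fin d) (Fin d) ℝ)
    (hsymm : ∀ i ∈ H, (P i)ᵀ = P i)
    (hidem : ∀ i ∈ H, P i * P i = P i)
    (Q' : Matrix (Fin d) (Fin m) ℝ)
    (horth : Q'ᵀ * Q' = 1)
    (hspan : {z : Fin d → ℝ | ∃ w : Fin m → ℝ, Q' *ᵥ w = z}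
        = {y : Fin d → ℝ | ∀ x : Fin d → ℝ, (∀ i ∈ H, P i *ᵥ x = x) → x ⬝ᵥ y = 0}) :
    (⋂ i ∈ E, {y : Fin m → ℝ | (Q'ᵀ * P i * Q') *ᵥ y = y}) = {0} ↔
      (⋂ i ∈ E, {x : Fin d → ℝ | P i *ᵥ x = x})
        = ⋂ i ∈ H, {x : Fin d → ℝ | P i *ᵥ x = x} := by
  have hQ_inj : Function.Injective (Q' *ᵥ ·) := fun a b hab => by
    simpa [mulVec_mulVec, horth] using congrArg (Q'ᵀ *ᵥ ·) hab
  have hcompress : (⋂ i ∈ E, {y : Fin m → ℝ | (Q'ᵀ * P i * Q') *ᵥ y = y})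
      = (Q' *ᵥ ·) ⁻¹' commonFixedSubmodule P E := by
    ext y
    simp only [Set.mem_iInter, Set.mem_ofPred_eq, Set.mem_preimage, SetLike.mem_coe,
      mem_commonFixedSubmodule]
    exact forall₂_congr fun i hi =>
      transpose_mul_mul_mulVec_eq_self_iff horth (hsymm i (hE hi)) (hidem i (hE hi)) y
  have hrange (x : Fin d → ℝ) :
      x ∈ Set.range (Q' *ᵥ ·) ↔ ∀ k ∈ commonFixedSubmodule P H, k ⬝ᵥ x = 0 := by
    simpa using Set.ext_iff.mp hspan x
  change _ ↔ (commonFixedSubmodule P E : Set (Fin d → ℝ)) = commonFixedSubmodule P H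
  rw [hcompress, SetLike.coe_set_eq,
    ← Submodule.forall_orthogonal_eq_zero_iff_eq (commonFixedSubmodule_anti P hE)]
  simp only [← hrange]
  exact hQ_inj.preimage_eq_zero_iff (mulVec_zero Q') (zero_mem _)

/-- Quotient construction: `P_i ∈ ℝ^{d×d}`, `i ∈ H`, are
orthogonal projections onto subspaces `𝒫_i` (their fixed-point sets),
`K = ⋂_{i∈H} 𝒫_i`, and `Q' ∈ ℝ^{d×m}` has orthonormal columns spanning `K^⊥`;
`P̄_i := Q P_i Q'` with `Q = Q'ᵀ` (which are orthogonal projections onto subspaces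
`𝒫̄_i ⊆ ℝ^m`, their fixed-point sets). Then for any nonempty subset `E ⊆ H`,
`⋂_{i∈E} 𝒫̄_i = {0}` if and only if `⋂_{i∈E} 𝒫_i = ⋂_{i∈H} 𝒫_i`. -/
theorem quotient_projection_intersection {N d m : ℕ} (H E : Finset (Fin N))
    (hE : E ⊆ H) (hEne : E.Nonempty)
    (P : Fin N → Matrix (Fin d) (Fin d) ℝ)
    (hsymm : ∀ i ∈ H, (P i)ᵀ = P i)
    (hidem : ∀ i ∈ H, P i * P i = P i)
    (Q' : Matrix (Fin d) (Fin m) ℝ)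
    (horth : Q'ᵀ * Q' = 1)
    (hspan : {z : Fin d → ℝ | ∃ w : Fin m → ℝ, Q' *ᵥ w = z}
        = {y : Fin d → ℝ | ∀ x : Fin d → ℝ, (∀ i ∈ H, P i *ᵥ x = x) → x ⬝ᵥ y = 0}) :
    (⋂ i ∈ E, {y : Fin m → ℝ | (Q'ᵀ * P i * Q') *ᵥ y = y}) = {0} ↔
      (⋂ i ∈ E, {x : Fin d → ℝ | P i *ᵥ x = x})
        = ⋂ i ∈ H, {x : Fin d → ℝ | P i *ᵥ x = x} :=
  quotient_projection_intersection_general H E hE P hsymm hidem Q' horth hspan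
end
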